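/- arXiv:1701.03401 — 3 statements merged into one kernel-verified Lean document; each statement's English description precedes it below -/
import Mathlib

section
/- For a strict partition λ = (λ₁ > λ₂ > ... > λ_ℓ > 0), the number n_λ = (|λ|!/(λ₁!⋯λ_ℓ!)) · ∏_{1 ≤ i < j ≤ ℓ} (λ_i − λ_j)/(λ_i + λ_j) is a positive integer (it counts shifted standard tableaux of shape λ). -/
/-!
The number `n_λ` is visibly positive. Integrality follows by induction on `|λ| + ℓ` from the
branching rule `n_λ = ∑ᵢ n_{λ - eᵢ}`, in which a term vanishes when `λ - eᵢ` has a repeated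
part and a trailing zero part can be dropped. Lowering `λᵢ` by one multiplies `n_λ` by
`(λᵢ / |λ|) ∏_{j ≠ i} r(λᵢ, λⱼ)`, so the branching rule is the identity
`∑ᵢ λᵢ ∏_{j ≠ i} r(λᵢ, λⱼ) = |λ|`. Since `r(t, s) = (μ t - ν s) / (μ t - μ s)` with
`μ t = t (t - 1)` and `ν s = s (s + 1)`, this identity compares the coefficients of `X ^ (ℓ - 1)`
in `∏ⱼ (X - ν λⱼ) - ∏ⱼ (X - μ λⱼ)` and in its Lagrange interpolant at the nodes `μ λᵢ`.
-/

open Finset Function Polynomial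

theorem sum_prod_sub_div_prod_erase_sub {F ι : Type*} [Field F] [DecidableEq ι]
    {s : Finset ι} {μ : ι → F} (hμ : Set.InjOn μ s) (ν : ι → F) :
    ∑ i ∈ s, (∏ j ∈ s, (μ i - ν j)) / ∏ j ∈ s.erase i, (μ i - μ j) = ∑ i ∈ s, (μ i - ν i) := by
  rcases s.eq_empty_or_nonempty with rfl | hs
  · simp
  have hdeg : (Lagrange.nodal s ν - Lagrange.nodal s μ).degree < #s := by
    have := degree_sub_lt_left (p := Lagrange.nodal s ν) (q := Lagrange.nodal s μ)
      (by simp only [Lagrange.degree_nodal]) Lagrange.nodal_ne_zero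
      (by rw [Lagrange.nodal_monic.leadingCoeff, Lagrange.nodal_monic.leadingCoeff])
    rwa [Lagrange.degree_nodal] at this
  have hcoeff := Lagrange.coeff_eq_sum hμ hdeg
  simp only [coeff_sub, Lagrange.nodal_eq, prod_X_sub_C_coeff_card_pred _ _ hs.card_pos,
    eval_sub, eval_prod, eval_X, eval_C] at hcoeff
  rw [sum_sub_distrib, ← neg_sub_neg, hcoeff]
  refine sum_congr rfl fun i hi => ?_
  rw [prod_eq_zero (f := fun j => μ i - μ j) hi (sub_self _), sub_zero]

theorem prod_pairs_lt_eq_prod_erase {ι M : Type*} [Fintype ι] [LinearOrder ι] [CommMonoid M]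
    (i : ι) (φ : ι → M) :
    ∏ a, ∏ b, (if a < b then (if a = i then φ b else if b = i then φ a else 1) else 1) =
      ∏ j ∈ univ.erase i, φ j := by
  have hsplit : ∀ a b : ι,
      (if a < b then (if a = i then φ b else if b = i then φ a else 1) else 1) =
        (if a = i then (if i < b then φ b else 1) else 1) *
          (if b = i then (if a < i then φ a else 1) else 1) := by
    intro a b
    by_cases hab : a < b <;> by_cases ha : a = i <;> by_cases hb : b = i <;> subst_vars <;>
      simp_all
  have hmerge : ∀ j, (if i < j then φ j else 1) * (if j < i then φ j else 1) =
      if j ≠ i then φ j else 1 := by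
    intro j
    rcases lt_trichotomy i j with h | rfl | h
    · simp [h, h.ne', not_lt_of_gt h]
    · simp
    · simp [h, h.ne, not_lt_of_gt h]
  simp only [hsplit, prod_mul_distrib, prod_ite_eq', mem_univ, if_true, prod_ite_irrel,
    prod_const_one]
  rw [← prod_mul_distrib, prod_congr rfl fun j _ => hmerge j, ← prod_filter, filter_ne']

theorem sum_update_sub_one_add_one {ι : Type*} [Fintype ι] [DecidableEq ι] {f : ι → ℕ} {i : ι}
    (hi : 0 < f i) : ∑ j, update f i (f i - 1) j + 1 = ∑ j, f j := by
  rw [sum_update_of_mem (mem_univ i), ← add_sum_erase _ _ (mem_univ i), sdiff_singleton_eq_erase]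
  omega

theorem StrictAnti.antitone_update_sub_one {ι : Type*} [PartialOrder ι] [DecidableEq ι]
    {f : ι → ℕ} (hf : StrictAnti f) (i : ι) : Antitone (update f i (f i - 1)) := by
  intro a b hab
  rcases hab.eq_or_lt with rfl | hlt
  · exact le_rfl
  rcases eq_or_ne a i with rfl | ha
  · simp only [update_self, update_of_ne hlt.ne']
    have := hf hlt
    omega
  rcases eq_or_ne b i with rfl | hb
  · simp only [update_self, update_of_ne ha]
    have := hf hlt
    omega
  · simpa only [update_of_ne ha, update_of_ne hb] using (hf hlt).le

section

variable {K : Type*} [Field K]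

/-- The factor by which `(t - s) / (t + s)` changes when `t` is lowered by one, written as
`(μ t - ν s) / (μ t - μ s)` with `μ t = t (t - 1)` and `ν s = s (s + 1)`. -/
def lowerRatio (t s : K) : K := (t * (t - 1) - s * (s + 1)) / (t * (t - 1) - s * (s - 1))

theorem div_sub_one_eq_mul_lowerRatio {t s : K} (hsub : t - s ≠ 0) (hadd : t + s ≠ 0) :
    (t - 1 - s) / (t - 1 + s) = (t - s) / (t + s) * lowerRatio t s := by
  rw [lowerRatio, show t * (t - 1) - s * (s + 1) = (t + s) * (t - 1 - s) by ring,
    show t * (t - 1) - s * (s - 1) = (t - s) * (t - 1 + s) by ring]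
  field_simp

theorem div_sub_one_eq_mul_lowerRatio' {t s : K} (hsub : t - s ≠ 0) (hadd : t + s ≠ 0) :
    (s - (t - 1)) / (s + (t - 1)) = (s - t) / (s + t) * lowerRatio t s := by
  rw [show (s - (t - 1)) / (s + (t - 1)) = -((t - 1 - s) / (t - 1 + s)) by ring,
    show (s - t) / (s + t) = -((t - s) / (t + s)) by ring,
    div_sub_one_eq_mul_lowerRatio hsub hadd, neg_mul]

theorem sum_mul_prod_lowerRatio [NeZero (2 : K)] {ι : Type*} [DecidableEq ι] {s : Finset ι}
    {x : ι → K} (hx : Set.InjOn (fun i => x i * (x i - 1)) s) :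
    ∑ i ∈ s, x i * ∏ j ∈ s.erase i, lowerRatio (x i) (x j) = ∑ i ∈ s, x i := by
  have hterm : ∀ i ∈ s, (∏ j ∈ s, (x i * (x i - 1) - x j * (x j + 1))) /
      ∏ j ∈ s.erase i, (x i * (x i - 1) - x j * (x j - 1)) =
      -2 * (x i * ∏ j ∈ s.erase i, lowerRatio (x i) (x j)) := by
    intro i hi
    rw [← mul_prod_erase _ _ hi, mul_div_assoc, ← prod_div_distrib]
    simp only [lowerRatio]
    ring
  have hlagrange := sum_prod_sub_div_prod_erase_sub hx (fun j => x j * (x j + 1))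
  rw [sum_congr rfl hterm, ← mul_sum] at hlagrange
  simp only [show ∀ t : K, t * (t - 1) - t * (t + 1) = -2 * t from fun t => by ring,
    ← mul_sum] at hlagrange
  exact mul_left_cancel₀ (neg_ne_zero.mpr two_ne_zero) hlagrange

variable {ι : Type*} [Fintype ι] [LinearOrder ι]

def schurProduct (x : ι → K) : K :=
  ∏ i, ∏ j, if i < j then (x i - x j) / (x i + x j) else 1

theorem schurProduct_update_sub_one (x : ι → K) (i : ι)
    (hx : ∀ j ≠ i, x i - x j ≠ 0 ∧ x i + x j ≠ 0) :
    schurProduct (update x i (x i - 1)) =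
      schurProduct x * ∏ j ∈ univ.erase i, lowerRatio (x i) (x j) := by
  rw [← prod_pairs_lt_eq_prod_erase, schurProduct, schurProduct, ← prod_mul_distrib]
  refine prod_congr rfl fun a _ => ?_
  rw [← prod_mul_distrib]
  refine prod_congr rfl fun b _ => ?_
  by_cases hab : a < b
  · simp only [hab, if_true]
    by_cases ha : a = i
    · subst ha
      have hb : b ≠ a := hab.ne'
      simp only [update_self, update_of_ne hb, if_true]
      exact div_sub_one_eq_mul_lowerRatio (hx b hb).1 (hx b hb).2
    by_cases hb : b = i
    · subst hb
      simp only [update_self, update_of_ne ha, if_true, if_neg ha]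
      exact div_sub_one_eq_mul_lowerRatio' (hx a ha).1 (hx a ha).2
    · simp [ha, hb]
  · simp [hab]

theorem schurProduct_eq_zero_of_not_injective {x : ι → K} (hx : ¬Injective x) :
    schurProduct x = 0 := by
  obtain ⟨a, b, hab, hne⟩ : ∃ a b, x a = x b ∧ a ≠ b := by
    simpa [Injective, and_comm] using hx
  wlog hlt : a < b generalizing a b
  · exact this b a hab.symm hne.symm (lt_of_le_of_ne (not_lt.mp hlt) hne.symm)
  exact prod_eq_zero (mem_univ a) (prod_eq_zero (mem_univ b) (by simp [hlt, hab]))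

theorem schurProduct_snoc_zero {m : ℕ} {x : Fin m → K} (hx : ∀ i, x i ≠ 0) :
    schurProduct (Fin.snoc x 0 : Fin (m + 1) → K) = schurProduct x := by
  have hnl : ∀ j : Fin m, ¬ Fin.last m < j.castSucc :=
    fun j => not_lt.mpr (Fin.castSucc_lt_last j).le
  simp only [schurProduct, Fin.prod_univ_castSucc, Fin.castSucc_lt_castSucc_iff,
    Fin.snoc_castSucc, Fin.snoc_last, Fin.castSucc_lt_last, if_true, lt_self_iff_false,
    if_false, sub_zero, add_zero, hnl, prod_const_one, mul_one]
  exact prod_congr rfl fun i _ => by rw [div_self (hx i), mul_one]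

end

section

variable {ι : Type*} [Fintype ι] [LinearOrder ι]

theorem schurProduct_pos {K : Type*} [Field K] [LinearOrder K] [IsStrictOrderedRing K]
    {x : ι → K} (hx : StrictAnti x) (hnonneg : ∀ i, 0 ≤ x i) : 0 < schurProduct x := by
  refine prod_pos fun a _ => prod_pos fun b _ => ?_
  split_ifs with hab
  · have := hx hab
    have := hnonneg b
    exact div_pos (by linarith) (by linarith)
  · exact one_pos

def shiftedNumber (lam : ι → ℕ) : ℚ :=
  ((∑ i, lam i).factorial : ℚ) / (∏ i, ((lam i).factorial : ℚ)) *
    schurProduct (fun i => (lam i : ℚ))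

theorem shiftedNumber_pos {lam : ι → ℕ} (hlam : StrictAnti lam) : 0 < shiftedNumber lam := by
  have := schurProduct_pos (x := fun i => (lam i : ℚ))
    (fun a b hab => Nat.cast_lt.mpr (hlam hab)) (fun i => by positivity)
  unfold shiftedNumber
  positivity

theorem shiftedNumber_eq_zero_of_not_injective {lam : ι → ℕ} (hlam : ¬Injective lam) :
    shiftedNumber lam = 0 := by
  rw [shiftedNumber, schurProduct_eq_zero_of_not_injective, mul_zero]
  exact fun h => hlam (Injective.of_comp (f := ((↑) : ℕ → ℚ)) h)

theorem shiftedNumber_update_sub_one {lam : ι → ℕ} (hlam : Injective lam) {i : ι}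
    (hi : 0 < lam i) :
    shiftedNumber (update lam i (lam i - 1)) =
      shiftedNumber lam * (lam i / (∑ j, lam j : ℕ)) *
        ∏ j ∈ univ.erase i, lowerRatio (lam i : ℚ) (lam j) := by
  have hx : ∀ j ≠ i, (lam i : ℚ) - lam j ≠ 0 ∧ (lam i : ℚ) + lam j ≠ 0 := fun j hj =>
    ⟨sub_ne_zero.mpr (by exact_mod_cast hlam.ne hj.symm), by positivity⟩
  have hcast : (fun j => (update lam i (lam i - 1) j : ℚ)) =
      update (fun j => (lam j : ℚ)) i ((lam i : ℚ) - 1) := by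
    funext j
    rcases eq_or_ne j i with rfl | hj
    · simp [Nat.cast_pred hi]
    · simp [hj]
  have hprod : ∏ j, ((lam j).factorial : ℚ) =
      (∏ j, ((update lam i (lam i - 1) j).factorial : ℚ)) * lam i := by
    rw [prod_congr rfl fun j _ =>
        apply_update (fun _ n => (Nat.factorial n : ℚ)) lam i (lam i - 1) j,
      prod_update_of_mem (mem_univ i), ← mul_prod_erase _ _ (mem_univ i),
      sdiff_singleton_eq_erase, ← Nat.mul_factorial_pred hi.ne']
    push_cast
    ring
  rw [shiftedNumber, shiftedNumber, hcast, schurProduct_update_sub_one _ _ hx, hprod,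
    ← sum_update_sub_one_add_one hi, Nat.factorial_succ]
  push_cast
  field_simp

theorem shiftedNumber_eq_sum_update [Nonempty ι] {lam : ι → ℕ} (hlam : Injective lam)
    (hpos : ∀ i, 0 < lam i) :
    shiftedNumber lam = ∑ i, shiftedNumber (update lam i (lam i - 1)) := by
  have hμ : Set.InjOn (fun j => (lam j : ℚ) * (lam j - 1)) (univ : Finset ι) := by
    intro a _ b _ hab
    have ha : (1 : ℚ) ≤ lam a := by exact_mod_cast hpos a
    have hb : (1 : ℚ) ≤ lam b := by exact_mod_cast hpos b
    have hfac : ((lam a : ℚ) - lam b) * (lam a + lam b - 1) = 0 := by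
      simp only at hab
      linear_combination hab
    have := (mul_eq_zero.mp hfac).resolve_right (ne_of_gt (by linarith))
    exact hlam (by exact_mod_cast sub_eq_zero.mp this)
  have hn : (∑ j, (lam j : ℚ)) ≠ 0 :=
    ne_of_gt (sum_pos (fun j _ => by exact_mod_cast hpos j) univ_nonempty)
  simp only [shiftedNumber_update_sub_one hlam (hpos _), mul_assoc, div_mul_eq_mul_div,
    ← mul_sum, ← sum_div, sum_mul_prod_lowerRatio hμ]
  rw [Nat.cast_sum, div_self hn, mul_one]

end

theorem shiftedNumber_snoc_zero {m : ℕ} {lam : Fin m → ℕ} (hlam : ∀ i, lam i ≠ 0) :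
    shiftedNumber (Fin.snoc lam 0 : Fin (m + 1) → ℕ) = shiftedNumber lam := by
  have hcast : (fun i => ((Fin.snoc lam 0 : Fin (m + 1) → ℕ) i : ℚ)) =
      Fin.snoc (fun i => (lam i : ℚ)) 0 := by
    rw [← Nat.cast_zero]
    exact Fin.comp_snoc _ lam 0
  simp only [shiftedNumber, Fin.sum_univ_castSucc, Fin.prod_univ_castSucc, Fin.snoc_castSucc,
    Fin.snoc_last, add_zero, Nat.factorial_zero, Nat.cast_one, mul_one]
  rw [hcast, schurProduct_snoc_zero fun i => Nat.cast_ne_zero.mpr (hlam i)]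

theorem exists_shiftedNumber_eq_natCast {ℓ : ℕ} {lam : Fin ℓ → ℕ} (hlam : Antitone lam) :
    ∃ m : ℕ, shiftedNumber lam = m := by
  induction hN : ∑ i, lam i + ℓ using Nat.strong_induction_on generalizing ℓ with
  | _ N ih =>
  by_cases hinj : Injective lam
  swap
  · exact ⟨0, by rw [shiftedNumber_eq_zero_of_not_injective hinj, Nat.cast_zero]⟩
  cases ℓ with
  | zero => exact ⟨1, by simp [shiftedNumber, schurProduct]⟩
  | succ k =>
    by_cases hlast : lam (Fin.last k) = 0
    · have hinit : ∀ j, Fin.init lam j ≠ 0 := fun j h =>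
        (Fin.castSucc_lt_last j).ne (hinj (h.trans hlast.symm))
      rw [← Fin.snoc_init_self lam, hlast, shiftedNumber_snoc_zero hinit]
      refine ih _ ?_ (fun a b hab => hlam (Fin.castSucc_le_castSucc_iff.mpr hab)) rfl
      rw [← hN, Fin.sum_univ_castSucc, hlast]
      simp [Fin.init]
    · have hpos : ∀ i, 0 < lam i := fun i =>
        (Nat.pos_of_ne_zero hlast).trans_le (hlam (Fin.le_last i))
      have hsub : ∀ i, ∑ j, update lam i (lam i - 1) j + (k + 1) < N := fun i => by
        have := sum_update_sub_one_add_one (hpos i)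
        omega
      choose m hm using fun i =>
        ih _ (hsub i) ((hlam.strictAnti_of_injective hinj).antitone_update_sub_one i) rfl
      refine ⟨∑ i, m i, ?_⟩
      rw [shiftedNumber_eq_sum_update hinj hpos, Nat.cast_sum]
      exact sum_congr rfl fun i _ => hm i

theorem shifted_tableau_number_is_positive_integer_general
    (ℓ : ℕ) (lam : Fin ℓ → ℕ) (hanti : StrictAnti lam) :
    ∃ m : ℕ, 0 < m ∧
      (m : ℚ) =
        ((∑ i, lam i).factorial : ℚ) / (∏ i, ((lam i).factorial : ℚ)) *
          ∏ i : Fin ℓ, ∏ j : Fin ℓ,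
            if i < j then ((lam i : ℚ) - (lam j : ℚ)) / ((lam i : ℚ) + (lam j : ℚ)) else 1 := by
  obtain ⟨m, hm⟩ := exists_shiftedNumber_eq_natCast hanti.antitone
  refine ⟨m, ?_, hm.symm⟩
  exact_mod_cast hm ▸ shiftedNumber_pos hanti

/-- For a strict partition `λ = (λ₁ > ⋯ > λ_ℓ > 0)`, the quantity
`n_λ = (|λ|!/(λ₁!⋯λ_ℓ!)) ∏_{i<j} (λᵢ-λⱼ)/(λᵢ+λⱼ)` is a positive integer. -/
theorem shifted_tableau_number_is_positive_integer
    (ℓ : ℕ) (lam : Fin ℓ → ℕ) (hanti : StrictAnti lam) (hpos : ∀ i, 0 < lam i) :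
    ∃ m : ℕ, 0 < m ∧
      (m : ℚ) =
        ((∑ i, lam i).factorial : ℚ) / (∏ i, ((lam i).factorial : ℚ)) *
          ∏ i : Fin ℓ, ∏ j : Fin ℓ,
            if i < j then ((lam i : ℚ) - (lam j : ℚ)) / ((lam i : ℚ) + (lam j : ℚ)) else 1 :=
  shifted_tableau_number_is_positive_integer_general ℓ lam hanti
end

section
/- For a strict partition λ of length ℓ ≤ n and a sequence a = (a₁, a₂, ...), the function Q_λ(x₁,...,xₙ | a) := (2^ℓ/(n−ℓ)!) · ∑_{σ ∈ Sₙ} [∏_{i=1}^{ℓ} (x_{σ(i)} | a)^{λ_i} · ∏_{i ≤ ℓ, i < j ≤ n} (x_{σ(i)} + x_{σ(j)})/(x_{σ(i)} − x_{σ(j)})] is a polynomial in x₁,...,xₙ. -/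
open MvPolynomial

/-- A strict partition of length at most `n`. -/
structure SPartition (n : ℕ) where
  len : ℕ
  len_le : len ≤ n
  part : Fin len → ℕ
  anti : StrictAnti part
  pos : ∀ i, 0 < part i

namespace SPartition

/-- `|λ| = λ₁ + ⋯ + λ_ℓ`. -/
def size {n : ℕ} (l : SPartition n) : ℕ := ∑ i, l.part i

/-- λ padded with zeros to length `n`. -/
def padN {n : ℕ} (l : SPartition n) : Fin n → ℕ :=
  fun i => if h : (i : ℕ) < l.len then l.part ⟨i, h⟩ else 0

/-- λ padded with zeros, as a point of `ℂⁿ`. -/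
noncomputable def padC {n : ℕ} (l : SPartition n) : Fin n → ℂ := fun i => (l.padN i : ℂ)

end SPartition

/-- A polynomial in `n` variables is Q-symmetric if it is symmetric and (when `n ≥ 2`)
the substitution `x₁ = t`, `x₂ = -t` yields a result independent of `t`. -/
def QSym {n : ℕ} (p : MvPolynomial (Fin n) ℂ) : Prop :=
  (∀ σ : Equiv.Perm (Fin n), MvPolynomial.rename σ p = p) ∧
  ∀ (_ : 2 ≤ n) (t s : ℂ) (x : Fin n → ℂ),
    MvPolynomial.eval
      (fun i : Fin n => if (i : ℕ) = 0 then t else if (i : ℕ) = 1 then -t else x i) p =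
    MvPolynomial.eval
      (fun i : Fin n => if (i : ℕ) = 0 then s else if (i : ℕ) = 1 then -s else x i) p

/-- The generalized power `(x | a)^k = ∏_{i=1}^k (x - a_i)`. -/
noncomputable def genPow (a : ℕ → ℂ) (k : ℕ) (x : ℂ) : ℂ :=
  ∏ i ∈ Finset.range k, (x - a i)

/-- The rational expression
`(2^ℓ/(n-ℓ)!) ∑_{σ ∈ Sₙ} ∏ᵢ (x_{σ(i)}|a)^{λᵢ} ∏_{i≤ℓ, i<j≤n} (x_{σ(i)}+x_{σ(j)})/(x_{σ(i)}-x_{σ(j)})`. -/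
noncomputable def QFormula {n : ℕ} (lam : SPartition n) (a : ℕ → ℂ) (x : Fin n → ℂ) : ℂ :=
  ((2 : ℂ) ^ lam.len / ((n - lam.len).factorial : ℂ)) *
    ∑ σ : Equiv.Perm (Fin n),
      (∏ i : Fin lam.len, genPow a (lam.part i) (x (σ (Fin.castLE lam.len_le i)))) *
      ∏ i : Fin lam.len, ∏ j : Fin n,
        if (i : ℕ) < (j : ℕ) then
          (x (σ (Fin.castLE lam.len_le i)) + x (σ j)) /
            (x (σ (Fin.castLE lam.len_le i)) - x (σ j))
        else 1

/-- `P` represents the function `QFormula lam a` (wherever the denominators are nonzero,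
i.e. at points with pairwise distinct coordinates). -/
def IsQPoly {n : ℕ} (lam : SPartition n) (a : ℕ → ℂ) (P : MvPolynomial (Fin n) ℂ) : Prop :=
  ∀ x : Fin n → ℂ, Function.Injective x → MvPolynomial.eval x P = QFormula lam a x

/-- The sequence `(0,0,0,…)`; `Q_λ = Q_λ(·|0)` is the classical Schur Q-function. -/
noncomputable def zeroSeq : ℕ → ℂ := fun _ => 0

/-- The sequence `δ = (0,1,2,…)`; `Q*_λ = Q_λ(·|δ)` is the factorial Schur Q-function. -/
noncomputable def deltaSeq : ℕ → ℂ := fun i => (i : ℂ)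

/-- `H(λ) = λ₁!⋯λ_ℓ! ∏_{i<j≤ℓ} (λᵢ+λⱼ)/(λᵢ-λⱼ)`. -/
noncomputable def Hval {n : ℕ} (lam : SPartition n) : ℂ :=
  (∏ i : Fin lam.len, ((lam.part i).factorial : ℂ)) *
    ∏ i : Fin lam.len, ∏ j : Fin lam.len,
      if i < j then
        ((lam.part i : ℂ) + (lam.part j : ℂ)) / ((lam.part i : ℂ) - (lam.part j : ℂ))
      else 1

/-!
Multiplying by the Vandermonde polynomial `V = ∏_{i<j} (xᵢ - xⱼ)` clears all denominators: the
`σ`-term times `V(x)` equals `sgn σ · N(x ∘ σ)`, where `N = ∏ᵢ (xᵢ | a)^{λᵢ} ∏_{i<j} wᵢⱼ` with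
`wᵢⱼ = xᵢ + xⱼ` for `i ≤ ℓ` and `wᵢⱼ = xᵢ - xⱼ` otherwise. So `Q_λ · V` is a multiple of the
antisymmetrization of `N`. An antisymmetric polynomial vanishes under `xⱼ ↦ xᵢ`, so it is divisible
by each of the pairwise non-associated primes `xᵢ - xⱼ`, hence by their product `V`.
-/

open Finset

theorem Matrix.prod_Ioi_sub_eq_mul_det_vandermonde {S : Type*} [CommRing S] {n : ℕ}
    (v : Fin n → S) :
    ∏ i, ∏ j ∈ Ioi i, (v i - v j) =
      (∏ i : Fin n, ∏ _j ∈ Ioi i, (-1 : S)) * (Matrix.vandermonde v).det := by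
  simp_rw [Matrix.det_vandermonde, ← prod_mul_distrib, neg_one_mul, neg_sub]

namespace MvPolynomial

variable {R : Type*} [CommRing R]

section

variable {σ : Type*} [DecidableEq σ]

theorem X_sub_X_dvd_sub_rename_update (i j : σ) (p : MvPolynomial σ R) :
    X i - X j ∣ p - rename (Function.update id j i) p := by
  rw [← Ideal.mem_span_singleton, ← Ideal.Quotient.eq]
  have hcomp : (Ideal.Quotient.mkₐ R (Ideal.span {X i - X j})).comp
      (rename (Function.update id j i)) = Ideal.Quotient.mkₐ R (Ideal.span {X i - X j}) := by
    refine algHom_ext fun k => ?_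
    rcases eq_or_ne k j with rfl | hk
    · simp [Ideal.Quotient.eq]
    · simp [hk]
  exact (congrArg (· p) hcomp).symm

theorem X_sub_X_dvd_iff (i j : σ) (p : MvPolynomial σ R) :
    X i - X j ∣ p ↔ rename (Function.update id j i) p = 0 := by
  refine ⟨fun ⟨q, hq⟩ => ?_, fun h => ?_⟩
  · rcases eq_or_ne i j with rfl | hij
    · simp_all
    · simp [hq, hij]
  · simpa [h] using X_sub_X_dvd_sub_rename_update i j p

theorem prime_X_sub_X [IsDomain R] {i j : σ} (hij : i ≠ j) :
    Prime (X i - X j : MvPolynomial σ R) := by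
  have hspan : Ideal.span {X i - X j} = RingHom.ker (rename (R := R) (Function.update id j i)) := by
    ext p
    rw [Ideal.mem_span_singleton, X_sub_X_dvd_iff, RingHom.mem_ker]
  rw [← Ideal.span_singleton_prime (sub_ne_zero.mpr ((X_injective (R := R)).ne hij)), hspan]
  exact RingHom.ker_isPrime _

variable [Fintype σ]

def IsAntisymmetric (p : MvPolynomial σ R) : Prop :=
  ∀ τ : Equiv.Perm σ, rename τ p = (Equiv.Perm.sign τ : ℤ) • p

theorem IsAntisymmetric.X_sub_X_dvd [IsDomain R] [CharZero R] {p : MvPolynomial σ R}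
    (hp : p.IsAntisymmetric) {i j : σ} (hij : i ≠ j) : X i - X j ∣ p := by
  -- substituting `X j := X i` absorbs the transposition, so it sends `p` to its own negative
  have hswap : Function.update id j i ∘ Equiv.swap i j = Function.update id j i := by
    ext k
    rcases eq_or_ne k i with rfl | hki
    · simp [hij]
    rcases eq_or_ne k j with rfl | hkj
    · simp [Function.update_of_ne hij]
    · simp [Equiv.swap_apply_of_ne_of_ne hki hkj]
  have h := congrArg (rename (Function.update id j i)) (hp (Equiv.swap i j))
  rw [rename_rename, hswap, Equiv.Perm.sign_swap hij] at h
  rw [X_sub_X_dvd_iff, ← self_eq_neg]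
  simpa using h

noncomputable def antisymmetrize (p : MvPolynomial σ R) : MvPolynomial σ R :=
  ∑ τ : Equiv.Perm σ, (Equiv.Perm.sign τ : ℤ) • rename τ p

theorem isAntisymmetric_antisymmetrize (p : MvPolynomial σ R) :
    (antisymmetrize p).IsAntisymmetric := by
  intro τ
  simp only [antisymmetrize, map_sum, map_zsmul, rename_rename, smul_sum]
  refine Fintype.sum_equiv (Equiv.mulLeft τ) _ _ fun ρ => ?_
  rw [Equiv.coe_mulLeft, Equiv.Perm.coe_mul, smul_smul, Equiv.Perm.sign_mul, Units.val_mul,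
    ← mul_assoc, ← Units.val_mul, Int.units_mul_self, Units.val_one, one_mul]

end

variable (R) in
noncomputable def vandermonde (n : ℕ) : MvPolynomial (Fin n) R :=
  ∏ i, ∏ j ∈ Ioi i, (X i - X j)

theorem isAntisymmetric_vandermonde (n : ℕ) : (vandermonde R n).IsAntisymmetric := by
  intro τ
  have hperm : Matrix.vandermonde (fun i => (X (τ i) : MvPolynomial (Fin n) R)) =
      (Matrix.vandermonde X).submatrix τ id := by
    ext i j
    simp [Matrix.vandermonde]
  simp only [vandermonde, map_prod, map_sub, rename_X]
  rw [Matrix.prod_Ioi_sub_eq_mul_det_vandermonde, hperm, Matrix.det_permute,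
    Matrix.prod_Ioi_sub_eq_mul_det_vandermonde, zsmul_eq_mul]
  ring

theorem eval_vandermonde_ne_zero [IsDomain R] {n : ℕ} {x : Fin n → R}
    (hx : Function.Injective x) :
    eval x (vandermonde R n) ≠ 0 := by
  simp only [vandermonde, map_prod, map_sub, eval_X]
  exact prod_ne_zero_iff.mpr fun i _ => prod_ne_zero_iff.mpr fun j hj =>
    sub_ne_zero.mpr (hx.ne (mem_Ioi.mp hj).ne)

theorem IsAntisymmetric.vandermonde_dvd [IsDomain R] [UniqueFactorizationMonoid R]
    [CharZero R] {n : ℕ} {p : MvPolynomial (Fin n) R} (hp : p.IsAntisymmetric) :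
    vandermonde R n ∣ p := by
  have hpairs : vandermonde R n =
      ∏ q ∈ ({q | q.1 < q.2} : Finset (Fin n × Fin n)), (X q.1 - X q.2) :=
    (prod_finset_product' _ _ _ (by simp)).symm
  rw [hpairs]
  refine prod_dvd_of_isRelPrime ?_ fun q hq => hp.X_sub_X_dvd (mem_filter.mp hq).2.ne
  intro q hq r hr hqr
  simp only [coe_filter, mem_univ, true_and, Set.mem_ofPred_eq] at hq hr
  rw [Function.onFun, (prime_X_sub_X hq.ne).irreducible.isRelPrime_iff_not_dvd, X_sub_X_dvd_iff]
  simp only [map_sub, rename_X, sub_eq_zero, X_injective.eq_iff, Function.update_apply, id]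
  obtain ⟨q₁, q₂⟩ := q
  obtain ⟨r₁, r₂⟩ := r
  simp only [ne_eq, Prod.mk.injEq, Fin.lt_def, Fin.ext_iff] at hq hr hqr ⊢
  split_ifs <;> omega

theorem eval_antisymmetrize_eq_sum_mul_eval_vandermonde {n : ℕ} {F : MvPolynomial (Fin n) R}
    {f : (Fin n → R) → R}
    (hF : ∀ y, Function.Injective y → eval y F = f y * eval y (vandermonde R n))
    {x : Fin n → R} (hx : Function.Injective x) :
    eval x (antisymmetrize F) =
      (∑ τ : Equiv.Perm (Fin n), f (x ∘ τ)) * eval x (vandermonde R n) := by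
  simp only [antisymmetrize, map_sum, map_zsmul, eval_rename, sum_mul]
  refine sum_congr rfl fun τ _ => ?_
  rw [hF _ (hx.comp τ.injective), ← eval_rename, isAntisymmetric_vandermonde, map_zsmul,
    mul_smul_comm, smul_smul, ← Units.val_mul, Int.units_mul_self, Units.val_one, one_smul]

end MvPolynomial

namespace SPartition

variable {n : ℕ} (lam : SPartition n) (a : ℕ → ℂ)

noncomputable def qTerm (y : Fin n → ℂ) : ℂ :=
  (∏ i, genPow a (lam.part i) (y (Fin.castLE lam.len_le i))) *
    ∏ i : Fin lam.len, ∏ j : Fin n,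
      if (i : ℕ) < (j : ℕ) then
        (y (Fin.castLE lam.len_le i) + y j) / (y (Fin.castLE lam.len_le i) - y j)
      else 1

noncomputable def qNumerator : MvPolynomial (Fin n) ℂ :=
  (∏ i, ∏ t ∈ range (lam.part i), (X (Fin.castLE lam.len_le i) - C (a t))) *
    ∏ i : Fin n, ∏ j ∈ Ioi i, if (i : ℕ) < lam.len then X i + X j else X i - X j

theorem qTerm_mul_eval_vandermonde {y : Fin n → ℂ} (hy : Function.Injective y) :
    lam.qTerm a y * eval y (vandermonde ℂ n) = eval y (lam.qNumerator a) := by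
  set r : Fin n → Fin n → ℂ := fun i j => (y i + y j) / (y i - y j)
  have hrows : ∏ i : Fin lam.len, ∏ j : Fin n,
        (if (i : ℕ) < (j : ℕ) then r (Fin.castLE lam.len_le i) j else 1) =
      ∏ i : Fin n, ∏ j ∈ Ioi i, if (i : ℕ) < lam.len then r i j else 1 := by
    refine Fintype.prod_of_injective _ (Fin.castLE_injective lam.len_le) _ _ ?_ fun i => ?_
    · intro i hi
      have hlen : ¬ (i : ℕ) < lam.len := fun h => hi ⟨⟨i, h⟩, rfl⟩
      simp [hlen]
    · simp only [Fin.val_castLE, i.isLt, if_true]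
      rw [← prod_filter]
      congr 1
      ext j
      simp [Fin.lt_def]
  simp only [qTerm, qNumerator, genPow, map_mul, map_prod, map_sub, map_add, eval_X, eval_C,
    apply_ite (eval y), vandermonde, mul_assoc]
  congr 1
  rw [hrows, ← prod_mul_distrib]
  refine prod_congr rfl fun i _ => ?_
  rw [← prod_mul_distrib]
  refine prod_congr rfl fun j hj => ?_
  have hne : y i - y j ≠ 0 := sub_ne_zero.mpr (hy.ne (mem_Ioi.mp hj).ne)
  split_ifs
  · exact div_mul_cancel₀ _ hne
  · ring

end SPartition

theorem QFormula_eq_sum_qTerm {n : ℕ} (lam : SPartition n) (a : ℕ → ℂ) (x : Fin n → ℂ) :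
    QFormula lam a x = (2 : ℂ) ^ lam.len / ((n - lam.len).factorial : ℂ) *
      ∑ σ : Equiv.Perm (Fin n), lam.qTerm a (x ∘ σ) :=
  rfl

/-- `Q_λ(x₁,…,xₙ | a)` is (represented by) a polynomial. -/
theorem QFormula_is_polynomial (n : ℕ) (lam : SPartition n) (a : ℕ → ℂ) :
    ∃ P : MvPolynomial (Fin n) ℂ, IsQPoly lam a P := by
  obtain ⟨P, hP⟩ := (isAntisymmetric_antisymmetrize (lam.qNumerator a)).vandermonde_dvd
  refine ⟨C ((2 : ℂ) ^ lam.len / ((n - lam.len).factorial : ℂ)) * P, fun x hx => ?_⟩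
  have hsum := eval_antisymmetrize_eq_sum_mul_eval_vandermonde
    (fun y hy => (lam.qTerm_mul_eval_vandermonde a hy).symm) hx
  rw [hP, map_mul, mul_comm] at hsum
  rw [QFormula_eq_sum_qTerm, map_mul, eval_C,
    mul_right_cancel₀ (eval_vandermonde_ne_zero hx) hsum]
end

section
/- Let λ, μ be strict partitions of length at most n with |μ| ≤ |λ| and μ ≠ λ. Then the factorial Schur Q-function satisfies the vanishing property Q*_λ(μ₁, ..., μₙ) = 0 (where μ is padded with zeros to length n). -/
/-!
The formula for `Q*_λ` cannot be evaluated at `μ` directly, since `μ` may repeat the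
coordinate `0`. Instead evaluate it at `μ + ε (0, 1, …, n - 1)`, which has distinct
coordinates for all but finitely many `ε`, and let `ε → 0`. In every summand the product of
falling factorials is continuous in `ε` and vanishes at `ε = 0`: otherwise `λᵢ ≤ μ_{σ(i)}` for
all `i`, which together with `|μ| ≤ |λ|` forces `λ` and `μ` to have the same parts. The
remaining factors converge, because two coordinates of `μ` agree only when both are `0`, and
then the perturbed ratio is the constant `(a + b) / (a - b)`.
-/

open MvPolynomial

open Filter Topology Finset

theorem eq_comp_and_eq_zero_of_le_comp_of_sum_le {ι κ : Type*} [Fintype ι] [Fintype κ]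
    {f : ι → κ} (hf : Function.Injective f) {a : κ → ℕ} {b : ι → ℕ}
    (hle : ∀ i, b i ≤ a (f i)) (hsum : ∑ j, a j ≤ ∑ i, b i) :
    (∀ i, b i = a (f i)) ∧ ∀ j ∉ Set.range f, a j = 0 := by
  classical
  have hsplit : ∑ j, a j = ∑ i, a (f i) + ∑ j ∈ univ \ univ.image f, a j := by
    rw [← sum_image fun x _ y _ h => hf h, add_comm, sum_sdiff (subset_univ _)]
  have hcomp : ∑ i, b i ≤ ∑ i, a (f i) := sum_le_sum fun i _ => hle i
  refine ⟨fun i => (sum_eq_sum_iff_of_le fun i _ => hle i).1 (by omega) i (mem_univ i),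
    fun j hj => sum_eq_zero_iff.1 (by omega : ∑ j ∈ univ \ univ.image f, a j = 0) j ?_⟩
  simpa using hj

lemma genPow_deltaSeq_natCast_eq_zero {k m : ℕ} (h : m < k) : genPow deltaSeq k m = 0 :=
  prod_eq_zero (mem_range.2 h) (by simp [deltaSeq])

namespace SPartition

variable {n : ℕ}

lemma padN_castLE (l : SPartition n) (i : Fin l.len) :
    l.padN (Fin.castLE l.len_le i) = l.part i :=
  dif_pos i.isLt

lemma padN_eq_zero_of_notMem_range (l : SPartition n) {j : Fin n}
    (hj : j ∉ Set.range (Fin.castLE l.len_le)) : l.padN j = 0 :=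
  dif_neg fun h => hj ⟨⟨j, h⟩, rfl⟩

lemma mem_range_castLE_of_padN_ne_zero (l : SPartition n) {j : Fin n} (hj : l.padN j ≠ 0) :
    j ∈ Set.range (Fin.castLE l.len_le) :=
  not_not.1 (mt l.padN_eq_zero_of_notMem_range hj)

lemma size_eq_sum_padN (l : SPartition n) : l.size = ∑ j, l.padN j :=
  Fintype.sum_of_injective _ (Fin.castLE_injective l.len_le) _ _
    (fun _ hj => l.padN_eq_zero_of_notMem_range hj) fun i => (l.padN_castLE i).symm

lemma padN_eq_zero_of_eq (l : SPartition n) {a b : Fin n} (hab : a ≠ b)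
    (h : l.padN a = l.padN b) : l.padN a = 0 := by
  by_contra ha
  obtain ⟨i, rfl⟩ := l.mem_range_castLE_of_padN_ne_zero ha
  obtain ⟨k, rfl⟩ := l.mem_range_castLE_of_padN_ne_zero (h ▸ ha)
  rw [padN_castLE, padN_castLE] at h
  exact hab (congrArg _ (l.anti.injective h))

lemma padC_eq_zero_of_eq (l : SPartition n) {a b : Fin n} (hab : a ≠ b)
    (h : l.padC a = l.padC b) : l.padC a = 0 := by
  simp only [padC, Nat.cast_inj, Nat.cast_eq_zero] at h ⊢
  exact l.padN_eq_zero_of_eq hab h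

lemma eq_of_range_part_eq {l m : SPartition n} (h : Set.range l.part = Set.range m.part) :
    l = m := by
  obtain ⟨k, hk, p, hp, hpos⟩ := l
  obtain ⟨k', hk', q, hq, hqpos⟩ := m
  obtain rfl : k = k' := by
    simpa [Set.ncard_range_of_injective hp.injective,
      Set.ncard_range_of_injective hq.injective] using congrArg Set.ncard h
  obtain rfl : p = q := (hp.range_inj hq).1 h
  rfl

end SPartition

open SPartition in
theorem prod_genPow_deltaSeq_padC_eq_zero {n : ℕ} {lam mu : SPartition n}
    (hsize : mu.size ≤ lam.size) (hne : mu ≠ lam) {f : Fin lam.len → Fin n}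
    (hf : Function.Injective f) :
    ∏ i, genPow deltaSeq (lam.part i) (mu.padC (f i)) = 0 := by
  by_contra hprod
  have hle : ∀ i, lam.part i ≤ mu.padN (f i) := fun i => by
    by_contra hlt
    exact hprod (prod_eq_zero (mem_univ i) (genPow_deltaSeq_natCast_eq_zero (not_le.1 hlt)))
  obtain ⟨heq, hzero⟩ :=
    eq_comp_and_eq_zero_of_le_comp_of_sum_le hf hle (by rwa [← size_eq_sum_padN])
  refine hne (eq_of_range_part_eq (Set.ext fun x => ⟨?_, ?_⟩)).symm
  · rintro ⟨i, rfl⟩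
    obtain ⟨k, hk⟩ := mu.mem_range_castLE_of_padN_ne_zero (heq i ▸ (lam.pos i).ne')
    exact ⟨k, by rw [heq i, ← hk, padN_castLE]⟩
  · rintro ⟨k, rfl⟩
    have hk : mu.padN (Fin.castLE mu.len_le k) ≠ 0 := by
      rw [padN_castLE]
      exact (mu.pos k).ne'
    obtain ⟨i, hi⟩ := not_not.1 (mt (hzero _) hk)
    exact ⟨i, by rw [heq i, hi, padN_castLE]⟩

section Perturbation

variable {n : ℕ}

noncomputable def perturb (x : Fin n → ℂ) (ε : ℂ) : Fin n → ℂ := fun i => x i + ε * i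

lemma perturb_zero (x : Fin n → ℂ) : perturb x 0 = x := by
  ext i
  simp [perturb]

@[fun_prop]
lemma continuous_perturb (x : Fin n → ℂ) : Continuous (perturb x) := by
  unfold perturb
  fun_prop

lemma tendsto_perturb (x : Fin n → ℂ) : Tendsto (perturb x) (𝓝[≠] 0) (𝓝 x) := by
  simpa [perturb_zero] using ((continuous_perturb x).tendsto 0).mono_left nhdsWithin_le_nhds

lemma eventually_injective_perturb (x : Fin n → ℂ) :
    ∀ᶠ ε in 𝓝[≠] 0, Function.Injective (perturb x ε) := by
  -- two coordinates `a ≠ b` collide only at `ε = (x b - x a) / (a - b)`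
  have hfin : {ε | ¬ Function.Injective (perturb x ε)}.Finite := by
    refine (Set.finite_range fun p : Fin n × Fin n => (x p.2 - x p.1) / (p.1 - p.2 : ℂ)).subset ?_
    rintro ε hε
    simp only [Function.Injective, not_forall] at hε
    obtain ⟨a, b, hab, hne⟩ := hε
    have hsub : (a : ℂ) - b ≠ 0 :=
      sub_ne_zero.2 fun h => hne (Fin.val_injective (by exact_mod_cast h))
    refine ⟨(a, b), ?_⟩
    simp only [perturb] at hab
    field_simp
    linear_combination -hab
  exact Eventually.mono (nhdsNE_le_cofinite 0 hfin.compl_mem_cofinite) fun ε h => not_not.1 h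

lemma exists_tendsto_perturb_ratio {x : Fin n → ℂ} (hx : ∀ a b, a ≠ b → x a = x b → x a = 0)
    {a b : Fin n} (hab : a ≠ b) :
    ∃ L, Tendsto (fun ε => (perturb x ε a + perturb x ε b) / (perturb x ε a - perturb x ε b))
      (𝓝[≠] 0) (𝓝 L) := by
  by_cases hxab : x a = x b
  · have ha : x a = 0 := hx a b hab hxab
    have hb : x b = 0 := hxab ▸ ha
    refine ⟨((a : ℂ) + b) / ((a : ℂ) - b), tendsto_const_nhds.congr' ?_⟩
    filter_upwards [self_mem_nhdsWithin] with ε hε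
    simp only [perturb, ha, hb, zero_add]
    rw [← mul_add, ← mul_sub, mul_div_mul_left _ _ hε]
  · have h := tendsto_pi_nhds.1 (tendsto_perturb x)
    exact ⟨_, ((h a).add (h b)).div ((h a).sub (h b)) (sub_ne_zero.2 hxab)⟩

lemma exists_tendsto_prod_perturb_ratio (lam : SPartition n) {x : Fin n → ℂ}
    (hx : ∀ i j, i ≠ j → x i = x j → x i = 0) (σ : Equiv.Perm (Fin n)) :
    ∃ L, Tendsto (fun ε => ∏ i : Fin lam.len, ∏ j : Fin n,
      if (i : ℕ) < (j : ℕ) then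
        (perturb x ε (σ (Fin.castLE lam.len_le i)) + perturb x ε (σ j)) /
          (perturb x ε (σ (Fin.castLE lam.len_le i)) - perturb x ε (σ j))
      else 1) (𝓝[≠] 0) (𝓝 L) := by
  have hij : ∀ (i : Fin lam.len) (j : Fin n), ∃ L, Tendsto (fun ε =>
      if (i : ℕ) < (j : ℕ) then
        (perturb x ε (σ (Fin.castLE lam.len_le i)) + perturb x ε (σ j)) /
          (perturb x ε (σ (Fin.castLE lam.len_le i)) - perturb x ε (σ j))
      else 1) (𝓝[≠] 0) (𝓝 L) := by
    intro i j
    split_ifs with hlt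
    · refine exists_tendsto_perturb_ratio hx (σ.injective.ne fun h => ?_)
      have := congrArg Fin.val h
      simp only [Fin.val_castLE] at this
      omega
    · exact ⟨1, tendsto_const_nhds⟩
  choose L hL using hij
  exact ⟨∏ i, ∏ j, L i j, tendsto_finsetProd _ fun i _ => tendsto_finsetProd _ fun j _ => hL i j⟩

theorem tendsto_QFormula_perturb (lam : SPartition n) (a : ℕ → ℂ) {x : Fin n → ℂ}
    (hx : ∀ i j, i ≠ j → x i = x j → x i = 0)
    (hprod : ∀ f : Fin lam.len → Fin n, Function.Injective f →
      ∏ i, genPow a (lam.part i) (x (f i)) = 0) :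
    Tendsto (fun ε => QFormula lam a (perturb x ε)) (𝓝[≠] 0) (𝓝 0) := by
  unfold QFormula
  rw [show 𝓝 (0 : ℂ) = 𝓝 (_ * ∑ _σ : Equiv.Perm (Fin n), 0) by simp]
  refine tendsto_const_nhds.mul (tendsto_finsetSum _ fun σ _ => ?_)
  obtain ⟨L, hL⟩ := exists_tendsto_prod_perturb_ratio lam hx σ
  have hcont : Continuous fun ε =>
      ∏ i, genPow a (lam.part i) (perturb x ε (σ (Fin.castLE lam.len_le i))) := by
    unfold genPow
    fun_prop
  convert ((hcont.tendsto 0).mono_left nhdsWithin_le_nhds).mul hL using 2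
  rw [perturb_zero, hprod (fun i => σ (Fin.castLE lam.len_le i))
    (σ.injective.comp (Fin.castLE_injective lam.len_le)), zero_mul]

theorem IsQPoly.eval_eq_zero_of_tendsto {lam : SPartition n} {a : ℕ → ℂ}
    {P : MvPolynomial (Fin n) ℂ} (hP : IsQPoly lam a P) {x : Fin n → ℂ}
    (hlim : Tendsto (fun ε => QFormula lam a (perturb x ε)) (𝓝[≠] 0) (𝓝 0)) :
    eval x P = 0 :=
  tendsto_nhds_unique
    ((((continuous_eval P).tendsto x).comp (tendsto_perturb x)).congr'
      ((eventually_injective_perturb x).mono fun _ => hP _))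
    hlim

end Perturbation

/-- Vanishing property: if `|μ| ≤ |λ|` and `μ ≠ λ`, then `Q*_λ(μ) = 0`. -/
theorem factorialSchurQ_vanishing (n : ℕ) (lam mu : SPartition n)
    (Pstar : MvPolynomial (Fin n) ℂ) (hPstar : IsQPoly lam deltaSeq Pstar)
    (hsize : mu.size ≤ lam.size) (hne : mu.padN ≠ lam.padN) :
    MvPolynomial.eval mu.padC Pstar = 0 :=
  hPstar.eval_eq_zero_of_tendsto <| tendsto_QFormula_perturb lam deltaSeq
    (fun _ _ hij => mu.padC_eq_zero_of_eq hij)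
    fun _ hf => prod_genPow_deltaSeq_padC_eq_zero hsize (ne_of_apply_ne SPartition.padN hne) hf
end
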